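/- Let C be a crystal framework in ℝ^d. Then the RUM spectrum is the union of the Bohr spectra of the almost periodic infinitesimal flexes of C: ω ∈ Ω(C) if and only if there exists an almost periodic infinitesimal flex u of C (viewed as a map ℤ^d → ℂ^{d|V₀|}) with [u, e_ω] ≠ 0. -/

import Mathlib

open Filter

noncomputable section

/-- The multi-power `z^k = z₁^{k₁} ⋯ z_d^{k_d}` for `z ∈ ℂ^d`, `k ∈ ℤ^d`. -/
def zpowVec {d : ℕ} (z : Fin d → ℂ) (k : Fin d → ℤ) : ℂ := ∏ j, z j ^ (k j)

/-- Membership in the `d`-torus `𝕋^d`. -/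
def OnTorus {d : ℕ} (z : Fin d → ℂ) : Prop := ∀ j, ‖z j‖ = 1

/-- A crystal framework in `ℝ^d`: a finite motif of vertices `V` placed by `p`,
a full-rank translation lattice generated by `a₁, …, a_d`, and a finite set of
motif edges `E` with endpoints `fst e = (v, l)` and `snd e = (w, m)` standing for
the joints `p(v, l)` and `p(w, m)`.  Joints are pairwise distinct and edge vectors
are nonzero. -/
structure CrystalFramework (d : ℕ) where
  V : Type
  fintypeV : Fintype V
  decV : DecidableEq V
  E : Type
  fintypeE : Fintype E
  p : V → Fin d → ℝ
  a : Fin d → Fin d → ℝ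
  indep : LinearIndependent ℝ a
  fst : E → V × (Fin d → ℤ)
  snd : E → V × (Fin d → ℤ)
  joint_injective : Function.Injective
    (fun vk : V × (Fin d → ℤ) =>
      (fun i => p vk.1 i + ∑ j, (vk.2 j : ℝ) * a j i : Fin d → ℝ))
  edge_nonzero : ∀ e : E,
    (fun i => p (fst e).1 i + ∑ j, ((fst e).2 j : ℝ) * a j i : Fin d → ℝ) ≠
    (fun i => p (snd e).1 i + ∑ j, ((snd e).2 j : ℝ) * a j i)

attribute [instance] CrystalFramework.fintypeV CrystalFramework.decV CrystalFramework.fintypeE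

namespace CrystalFramework

variable {d : ℕ} (C : CrystalFramework d)

/-- The joint `p(v, k) = p(v) + k₁a₁ + ⋯ + k_d a_d`. -/
def joint (v : C.V) (k : Fin d → ℤ) : Fin d → ℝ :=
  fun i => C.p v i + ∑ j, (k j : ℝ) * C.a j i

/-- The edge vector `p(e) = p(v, l) - p(w, m)` for the motif edge `e = ((v,l),(w,m))`. -/
def edgeVec (e : C.E) : Fin d → ℝ :=
  fun i => C.joint (C.fst e).1 (C.fst e).2 i - C.joint (C.snd e).1 (C.snd e).2 i

/-- A complex velocity field `u` is an infinitesimal flex: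
`p(e) ⋅ (u(v, l+k) - u(w, m+k)) = 0` for every motif edge and every `k ∈ ℤ^d`. -/
def IsFlex (u : C.V × (Fin d → ℤ) → Fin d → ℂ) : Prop :=
  ∀ (e : C.E) (k : Fin d → ℤ),
    ∑ i, (C.edgeVec e i : ℂ) *
      (u ((C.fst e).1, fun j => (C.fst e).2 j + k j) i -
       u ((C.snd e).1, fun j => (C.snd e).2 j + k j) i) = 0

/-- A real velocity field `u` is an infinitesimal flex. -/
def IsRealFlex (u : C.V × (Fin d → ℤ) → Fin d → ℝ) : Prop :=
  ∀ (e : C.E) (k : Fin d → ℤ),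
    ∑ i, C.edgeVec e i *
      (u ((C.fst e).1, fun j => (C.fst e).2 j + k j) i -
       u ((C.snd e).1, fun j => (C.snd e).2 j + k j) i) = 0

/-- A complex velocity field is trivial if the flex condition holds for every pair of joints. -/
def IsTrivial (u : C.V × (Fin d → ℤ) → Fin d → ℂ) : Prop :=
  ∀ (v w : C.V) (k k' : Fin d → ℤ),
    ∑ i, ((C.joint v k i - C.joint w k' i : ℝ) : ℂ) * (u (v, k) i - u (w, k') i) = 0

/-- A real velocity field is trivial if the flex condition holds for every pair of joints. -/
def IsRealTrivial (u : C.V × (Fin d → ℤ) → Fin d → ℝ) : Prop :=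
  ∀ (v w : C.V) (k k' : Fin d → ℤ),
    ∑ i, (C.joint v k i - C.joint w k' i) * (u (v, k) i - u (w, k') i) = 0

/-- A complex velocity field is strictly periodic if `u(v,k) = u(v,0)`. -/
def StrictlyPeriodic (u : C.V × (Fin d → ℤ) → Fin d → ℂ) : Prop :=
  ∀ (v : C.V) (k : Fin d → ℤ), u (v, k) = u (v, 0)

/-- A real velocity field is strictly periodic if `u(v,k) = u(v,0)`. -/
def StrictlyPeriodicReal (u : C.V × (Fin d → ℤ) → Fin d → ℝ) : Prop :=
  ∀ (v : C.V) (k : Fin d → ℤ), u (v, k) = u (v, 0)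

/-- The `ω`-phase-periodic velocity field `b ⊗ e_ω : (v,k) ↦ ω^k b(v)`. -/
def phaseField (ω : Fin d → ℂ) (b : C.V → Fin d → ℂ) :
    C.V × (Fin d → ℤ) → Fin d → ℂ :=
  fun vk i => zpowVec ω vk.2 * b vk.1 i

/-- The symbol function `Φ_C(z)`: the row of the motif edge `e = ((v,l),(w,m))` has
entries `z̄^l p(e)` in the columns of `v` and `-z̄^m p(e)` in the columns of `w`
(in particular entries `(z̄^l - z̄^m) p(e)` in the columns of `v` when `v = w`). -/
def symbol (z : Fin d → ℂ) : Matrix C.E (C.V × Fin d) ℂ :=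
  Matrix.of fun e xi =>
    (C.edgeVec e xi.2 : ℂ) *
      ((if xi.1 = (C.fst e).1 then
          zpowVec (fun j => (starRingEnd ℂ) (z j)) (C.fst e).2 else 0) -
       (if xi.1 = (C.snd e).1 then
          zpowVec (fun j => (starRingEnd ℂ) (z j)) (C.snd e).2 else 0))

/-- The RUM spectrum `Ω(C)`: the set of `ω ∈ 𝕋^d` admitting a nonzero
`ω`-phase-periodic infinitesimal flex. -/
def RUM : Set (Fin d → ℂ) :=
  {ω | OnTorus ω ∧ ∃ b : C.V → Fin d → ℂ, b ≠ 0 ∧ C.IsFlex (C.phaseField ω b)}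

end CrystalFramework

/-- The box `{k ∈ ℤ^d : |k_j| ≤ N for all j}`. -/
def box (d : ℕ) (N : ℕ) : Finset (Fin d → ℤ) :=
  Fintype.piFinset fun _ => Finset.Icc (-(N : ℤ)) (N : ℤ)

/-- The average `(2N+1)^{-d} ∑_{|k_j| ≤ N} f(k)`. -/
def boxAvg {d : ℕ} (f : (Fin d → ℤ) → ℂ) (N : ℕ) : ℂ :=
  (((2 * N + 1 : ℕ) : ℂ) ^ d)⁻¹ * ∑ k ∈ box d N, f k

/-- `f : ℤ^d → ℂ` has mean value `L`. -/
def HasMean {d : ℕ} (f : (Fin d → ℤ) → ℂ) (L : ℂ) : Prop :=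
  Tendsto (boxAvg f) atTop (nhds L)

/-- The mean pairing `[h, g] = lim_N (2N+1)^{-d} ∑_{|k_j| ≤ N} h(k) ⬝ conj (g(k))`,
computed componentwise, has value `L`. -/
def HasMeanPairing {d : ℕ} {ι : Type} [Fintype ι]
    (h : (Fin d → ℤ) → ι → ℂ) (g : (Fin d → ℤ) → ℂ) (L : ι → ℂ) : Prop :=
  ∀ i, HasMean (fun k => h k i * (starRingEnd ℂ) (g k)) (L i)

/-- The pure frequency sequence `e_ω(k) = ω^k`. -/
def eOmega {d : ℕ} (ω : Fin d → ℂ) : (Fin d → ℤ) → ℂ := fun k => zpowVec ω k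

/-- Bohr almost periodicity for a bounded `h : ℤ^d → ℂ^ι`: for every `ε > 0`
there is `R > 0` such that every closed Euclidean ball of radius `R` in `ℝ^d`
contains an `ε`-translation vector `l` of `h`, i.e. `‖R_l h - h‖_∞ < ε`. -/
def IsBohrAP {d : ℕ} {ι : Type} [Fintype ι] (h : (Fin d → ℤ) → ι → ℂ) : Prop :=
  (∃ M : ℝ, ∀ k i, ‖h k i‖ ≤ M) ∧
  ∀ ε > (0 : ℝ), ∃ R > (0 : ℝ), ∀ c : Fin d → ℝ, ∃ l : Fin d → ℤ,
    Real.sqrt (∑ j, ((l j : ℝ) - c j) ^ 2) ≤ R ∧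
    ∀ k i, ‖h (fun j => k j - l j) i - h k i‖ < ε

/-!
If `b ≠ 0` and `b ⊗ e_ω` is a flex, then `b ⊗ e_ω` is itself almost periodic with
`[b ⊗ e_ω, e_ω] = b`: the powers `ω^l` lie on the unit circle, so finitely many of them are
`δ`-dense among all of them, and hence every ball of a fixed radius contains an `l` with
`|ω^l - 1| < δ`.

Conversely, let `u` be a bounded flex with `[u, e_ω] = L ≠ 0`. Translating a box by `l` changes
only `O(N^{d-1})` of its `(2N+1)^d` points, so box means of bounded sequences are translation
invariant and `[u(·, l + ·), e_ω] = ω^l L`. Averaging the flex condition on the edges against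
`e_ω` then shows that `L ⊗ e_ω` is a flex.
-/

open Topology ComplexConjugate
open scoped Finset

theorem TotallyBounded.exists_finset_forall_exists_dist_lt {α X : Type*} [PseudoMetricSpace X]
    {f : α → X} (hf : TotallyBounded (Set.range f)) {δ : ℝ} (hδ : 0 < δ) :
    ∃ F : Finset α, ∀ a, ∃ n ∈ F, dist (f n) (f a) < δ := by
  rw [← Set.image_univ] at hf
  obtain ⟨s, -, hs, hcover⟩ := Set.exists_subset_image_finite_and.mp
    (Metric.finite_approx_of_totallyBounded hf δ hδ)
  refine ⟨hs.toFinset, fun a => ?_⟩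
  obtain ⟨_, ⟨n, hn, rfl⟩, hdist⟩ :=
    Set.mem_iUnion₂.mp (hcover (Set.mem_image_of_mem f (Set.mem_univ a)))
  exact ⟨n, hs.mem_toFinset.mpr hn, dist_comm (f n) (f a) ▸ hdist⟩

section

variable {d : ℕ}

section Torus

variable {ω : Fin d → ℂ}

theorem OnTorus.ne_zero (hω : OnTorus ω) (j : Fin d) : ω j ≠ 0 :=
  norm_ne_zero_iff.mp (by simp [hω j])

theorem zpowVec_add (hω : ∀ j, ω j ≠ 0) (k l : Fin d → ℤ) :
    zpowVec ω (k + l) = zpowVec ω k * zpowVec ω l := by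
  simp only [zpowVec, Pi.add_apply, zpow_add₀ (hω _), Finset.prod_mul_distrib]

theorem norm_zpowVec (hω : OnTorus ω) (k : Fin d → ℤ) : ‖zpowVec ω k‖ = 1 := by
  simp [zpowVec, norm_prod, hω _]

theorem zpowVec_mul_conj (hω : OnTorus ω) (k : Fin d → ℤ) :
    zpowVec ω k * conj (zpowVec ω k) = 1 := by
  rw [Complex.mul_conj', norm_zpowVec hω]
  norm_num

theorem norm_zpowVec_add_sub_zpowVec_add (hω : OnTorus ω) (k a b : Fin d → ℤ) :
    ‖zpowVec ω (k + a) - zpowVec ω (k + b)‖ = ‖zpowVec ω a - zpowVec ω b‖ := by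
  rw [zpowVec_add hω.ne_zero, zpowVec_add hω.ne_zero, ← mul_sub, norm_mul, norm_zpowVec hω,
    one_mul]

theorem OnTorus.exists_finset_forall_exists_norm_zpowVec_sub_lt (hω : OnTorus ω) {δ : ℝ}
    (hδ : 0 < δ) : ∃ F : Finset (Fin d → ℤ), ∀ m, ∃ n ∈ F, ‖zpowVec ω n - zpowVec ω m‖ < δ := by
  have hrange : Set.range (zpowVec ω) ⊆ Metric.sphere 0 1 := by
    rintro _ ⟨k, rfl⟩
    simp [norm_zpowVec hω k]
  have hbdd := (isCompact_sphere (0 : ℂ) 1).totallyBounded.subset hrange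
  simpa only [dist_eq_norm] using hbdd.exists_finset_forall_exists_dist_lt hδ

end Torus

theorem isBohrAP_of_forall_exists_finset {ι : Type} [Fintype ι] {h : (Fin d → ℤ) → ι → ℂ}
    (hbdd : ∃ M : ℝ, ∀ k i, ‖h k i‖ ≤ M)
    (htrans : ∀ ε > (0 : ℝ), ∃ F : Finset (Fin d → ℤ),
      ∀ m, ∃ n ∈ F, ∀ k i, ‖h (k - (m - n)) i - h k i‖ < ε) :
    IsBohrAP h := by
  refine ⟨hbdd, fun ε hε => ?_⟩
  obtain ⟨F, hF⟩ := htrans ε hε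
  let toE : (Fin d → ℝ) → EuclideanSpace ℝ (Fin d) := WithLp.toLp 2
  let ofInt : (Fin d → ℤ) → Fin d → ℝ := fun k j => k j
  have hdist (x y : Fin d → ℝ) : dist (toE x) (toE y) = Real.sqrt (∑ j, (x j - y j) ^ 2) := by
    simp [toE, EuclideanSpace.dist_eq, Real.dist_eq, sq_abs]
  refine ⟨∑ n ∈ F, ‖toE (ofInt n)‖ + Real.sqrt d + 1, by positivity, fun c => ?_⟩
  obtain ⟨n, hnF, hn⟩ := hF fun j => ⌊c j⌋
  refine ⟨(fun j => ⌊c j⌋) - n, ?_, hn⟩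
  have hfloor : dist (toE (ofInt fun j => ⌊c j⌋)) (toE c) ≤ Real.sqrt d := by
    rw [hdist]
    refine Real.sqrt_le_sqrt ?_
    calc ∑ j, (ofInt (fun j => ⌊c j⌋) j - c j) ^ 2 ≤ ∑ _j : Fin d, (1 : ℝ) :=
          Finset.sum_le_sum fun j _ => by
            have := Int.floor_le (c j)
            have := Int.lt_floor_add_one (c j)
            simp only [ofInt]
            nlinarith
      _ = d := by simp
  have hnorm : ‖toE (ofInt n)‖ ≤ ∑ n ∈ F, ‖toE (ofInt n)‖ :=
    Finset.single_le_sum (f := fun n => ‖toE (ofInt n)‖) (fun _ _ => norm_nonneg _) hnF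
  calc Real.sqrt (∑ j, (((⌊c j⌋ - n j : ℤ) : ℝ) - c j) ^ 2)
      = dist (toE (ofInt fun j => ⌊c j⌋) - toE (ofInt n)) (toE c) := by
        rw [← hdist]; congr 1; ext j; simp [toE, ofInt]
    _ ≤ ‖toE (ofInt n)‖ + dist (toE (ofInt fun j => ⌊c j⌋)) (toE c) := by
        rw [dist_eq_norm, dist_eq_norm, sub_right_comm, add_comm]
        exact norm_sub_le _ _
    _ ≤ _ := by linarith

section Mean

theorem mem_box {N : ℕ} {k : Fin d → ℤ} : k ∈ box d N ↔ ∀ j, |k j| ≤ N := by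
  simp [box, abs_le]

theorem card_box (d N : ℕ) : #(box d N) = (2 * N + 1) ^ d := by
  simp only [box, Fintype.card_piFinset, Int.card_Icc, Finset.prod_const, Finset.card_univ,
    Fintype.card_fin]
  congr 1
  omega

theorem box_mono {N N' : ℕ} (h : N ≤ N') : box d N ⊆ box d N' := fun k hk =>
  mem_box.mpr fun j => (mem_box.mp hk j).trans (by exact_mod_cast h)

theorem boxAvg_eq (f : (Fin d → ℤ) → ℂ) (N : ℕ) :
    boxAvg f N = (#(box d N) : ℂ)⁻¹ * ∑ k ∈ box d N, f k := by
  rw [boxAvg, card_box]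
  push_cast
  rfl

theorem hasMean_const (c : ℂ) : HasMean (fun _ : Fin d → ℤ => c) c := by
  have : boxAvg (fun _ : Fin d → ℤ => c) = fun _ => c := by
    ext N
    have hcard : (#(box d N) : ℂ) ≠ 0 := Nat.cast_ne_zero.mpr (by rw [card_box]; positivity)
    rw [boxAvg_eq, Finset.sum_const, nsmul_eq_mul, inv_mul_cancel_left₀ hcard]
  rw [HasMean, this]
  exact tendsto_const_nhds

theorem HasMean.unique {f : (Fin d → ℤ) → ℂ} {L L' : ℂ} (h : HasMean f L) (h' : HasMean f L') :
    L = L' :=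
  tendsto_nhds_unique h h'

theorem HasMean.const_mul {f : (Fin d → ℤ) → ℂ} {L : ℂ} (c : ℂ) (h : HasMean f L) :
    HasMean (fun k => c * f k) (c * L) := by
  have : boxAvg (fun k => c * f k) = fun N => c * boxAvg f N := by
    ext N
    rw [boxAvg, boxAvg, ← Finset.mul_sum, mul_left_comm]
  rw [HasMean, this]
  exact Filter.Tendsto.const_mul c h

theorem HasMean.sub {f g : (Fin d → ℤ) → ℂ} {L L' : ℂ} (hf : HasMean f L) (hg : HasMean g L') :
    HasMean (fun k => f k - g k) (L - L') := by
  have : boxAvg (fun k => f k - g k) = fun N => boxAvg f N - boxAvg g N := by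
    ext N
    rw [boxAvg, boxAvg, boxAvg, Finset.sum_sub_distrib, mul_sub]
  rw [HasMean, this]
  exact Filter.Tendsto.sub hf hg

theorem HasMean.sum {ι : Type*} (s : Finset ι) {f : ι → (Fin d → ℤ) → ℂ} {L : ι → ℂ}
    (h : ∀ i ∈ s, HasMean (f i) (L i)) : HasMean (fun k => ∑ i ∈ s, f i k) (∑ i ∈ s, L i) := by
  have : boxAvg (fun k => ∑ i ∈ s, f i k) = fun N => ∑ i ∈ s, boxAvg (f i) N := by
    ext N
    simp only [boxAvg, Finset.sum_comm (s := box d N), Finset.mul_sum]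
  rw [HasMean, this]
  exact tendsto_finsetSum s h

theorem norm_sum_sub_sum_le_of_subset {α E : Type*} [DecidableEq α] [SeminormedAddCommGroup E]
    {s t u : Finset α} (hs : s ⊆ u) (ht : t ⊆ u) {f : α → E} {M : ℝ} (hM : 0 ≤ M)
    (hf : ∀ a, ‖f a‖ ≤ M) :
    ‖∑ a ∈ s, f a - ∑ a ∈ t, f a‖ ≤ M * (2 * #u - #s - #t) := by
  have hcard {s t : Finset α} (hs : s ⊆ u) (ht : t ⊆ u) : (#(s \ t) : ℝ) ≤ #u - #t := by
    have := Finset.card_le_card (Finset.sdiff_subset_sdiff hs (le_refl t))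
    rw [Finset.card_sdiff_of_subset ht] at this
    have := Finset.card_le_card ht
    rw [le_sub_iff_add_le]
    exact_mod_cast (by omega : #(s \ t) + #t ≤ #u)
  have hnorm (s : Finset α) : ‖∑ a ∈ s, f a‖ ≤ #s * M := by
    simpa using norm_sum_le_of_le s fun a _ => hf a
  rw [← Finset.sum_sdiff_sub_sum_sdiff]
  calc _ ≤ ‖∑ a ∈ s \ t, f a‖ + ‖∑ a ∈ t \ s, f a‖ := norm_sub_le _ _
    _ ≤ #(s \ t) * M + #(t \ s) * M := add_le_add (hnorm _) (hnorm _)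
    _ ≤ (#u - #t) * M + (#u - #s) * M := by
      gcongr
      exacts [hcard hs ht, hcard ht hs]
    _ = M * (2 * #u - #s - #t) := by ring

theorem HasMean.comp_add_left {f : (Fin d → ℤ) → ℂ} {L : ℂ} {M : ℝ} (hf : ∀ k, ‖f k‖ ≤ M)
    (h : HasMean f L) (l : Fin d → ℤ) : HasMean (fun k => f (l + k)) L := by
  obtain ⟨m, hm⟩ : ∃ m : ℕ, ∀ j, |l j| ≤ m := by
    refine ⟨∑ j, (l j).natAbs, fun j => ?_⟩
    rw [Int.abs_eq_natAbs]
    exact_mod_cast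
      Finset.single_le_sum (f := fun j => (l j).natAbs) (by simp) (Finset.mem_univ j)
  have hM : 0 ≤ M := (norm_nonneg _).trans (hf 0)
  have hdiff (N : ℕ) : ‖boxAvg (fun k => f (l + k)) N - boxAvg f N‖ ≤
      2 * M * ((#(box d (N + m)) : ℝ) / #(box d N) - 1) := by
    have hshift : (box d N).map (addLeftEmbedding l) ⊆ box d (N + m) := by
      intro k hk
      obtain ⟨k, hk', rfl⟩ := Finset.mem_map.mp hk
      refine mem_box.mpr fun j => (abs_add_le _ _).trans ?_
      push_cast
      linarith [hm j, mem_box.mp hk' j]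
    have hpos : (0 : ℝ) < #(box d N) := by rw [card_box]; positivity
    have hsum : ∑ k ∈ box d N, f (l + k) = ∑ k ∈ (box d N).map (addLeftEmbedding l), f k := by
      simp [Finset.sum_map]
    have hcard : #((box d N).map (addLeftEmbedding l)) = #(box d N) := Finset.card_map _
    rw [boxAvg_eq, boxAvg_eq, ← mul_sub, norm_mul, norm_inv, Complex.norm_natCast, hsum]
    calc _ ≤ (#(box d N) : ℝ)⁻¹ * (M * (2 * #(box d (N + m)) - #(box d N) - #(box d N))) := by
          gcongr
          simpa only [hcard] using
            norm_sum_sub_sum_le_of_subset hshift (box_mono (N.le_add_right m)) hM hf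
      _ = _ := by
          field_simp
          ring
  have hlim : Tendsto (fun N : ℕ => 2 * M * ((#(box d (N + m)) : ℝ) / #(box d N) - 1)) atTop
      (𝓝 0) := by
    have : Tendsto (fun N : ℕ => ((2 * m + 1 : ℝ) + 2 * N) / (1 + 2 * N)) atTop (𝓝 (2 / 2)) :=
      tendsto_add_mul_div_add_mul_atTop_nhds (2 * m + 1 : ℝ) 1 2 two_ne_zero
    convert ((this.pow d).sub_const 1).const_mul (2 * M) using 2 with N
    · simp only [card_box, div_pow]
      push_cast
      ring_nf
    · simp
  have := (squeeze_zero_norm hdiff hlim).add h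
  rw [HasMean]
  simpa only [zero_add, sub_add_cancel] using this

theorem HasMean.comp_add_left_mul_conj_eOmega {ω : Fin d → ℂ} (hω : OnTorus ω) {g : (Fin d → ℤ) → ℂ}
    {M : ℝ} (hg : ∀ k, ‖g k‖ ≤ M) {c : ℂ} (h : HasMean (fun k => g k * conj (eOmega ω k)) c)
    (l : Fin d → ℤ) :
    HasMean (fun k => g (l + k) * conj (eOmega ω k)) (zpowVec ω l * c) := by
  have hbdd (k : Fin d → ℤ) : ‖g k * conj (eOmega ω k)‖ ≤ M := by
    simpa [eOmega, norm_zpowVec hω] using hg k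
  convert (h.comp_add_left hbdd l).const_mul (zpowVec ω l) using 2 with k
  simp only [eOmega, zpowVec_add hω.ne_zero, map_mul]
  linear_combination (g (l + k) * conj (zpowVec ω k)) * (zpowVec_mul_conj hω l).symm

end Mean

namespace CrystalFramework

variable (C : CrystalFramework d) {ω : Fin d → ℂ}

theorem isBohrAP_phaseField (hω : OnTorus ω) (b : C.V → Fin d → ℂ) :
    IsBohrAP (fun k (vi : C.V × Fin d) => C.phaseField ω b (vi.1, k) vi.2) := by
  have hb (vi : C.V × Fin d) : ‖b vi.1 vi.2‖ ≤ ‖b‖ :=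
    (norm_le_pi_norm (b vi.1) vi.2).trans (norm_le_pi_norm b vi.1)
  refine isBohrAP_of_forall_exists_finset ⟨‖b‖, fun k vi => ?_⟩ fun ε hε => ?_
  · simpa [phaseField, norm_zpowVec hω] using hb vi
  obtain ⟨F, hF⟩ := hω.exists_finset_forall_exists_norm_zpowVec_sub_lt
    (div_pos hε (by positivity : 0 < ‖b‖ + 1))
  refine ⟨F, fun m => ?_⟩
  obtain ⟨n, hnF, hn⟩ := hF m
  refine ⟨n, hnF, fun k vi => ?_⟩
  have hshift := norm_zpowVec_add_sub_zpowVec_add hω (k - m) n m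
  rw [sub_add_cancel, sub_add] at hshift
  calc ‖C.phaseField ω b (vi.1, k - (m - n)) vi.2 - C.phaseField ω b (vi.1, k) vi.2‖
      = ‖zpowVec ω n - zpowVec ω m‖ * ‖b vi.1 vi.2‖ := by
        simp only [phaseField]
        rw [← sub_mul, norm_mul, hshift]
    _ ≤ ε / (‖b‖ + 1) * ‖b‖ := by gcongr; exact hb vi
    _ < ε := by
        rw [div_mul_eq_mul_div, div_lt_iff₀ (by positivity)]
        nlinarith [norm_nonneg b]

theorem hasMeanPairing_phaseField (hω : OnTorus ω) (b : C.V → Fin d → ℂ) :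
    HasMeanPairing (fun k (vi : C.V × Fin d) => C.phaseField ω b (vi.1, k) vi.2) (eOmega ω)
      (fun vi => b vi.1 vi.2) := by
  intro vi
  convert hasMean_const (b vi.1 vi.2) using 2 with k
  simp only [phaseField, eOmega]
  rw [mul_right_comm, zpowVec_mul_conj hω, one_mul]

theorem isFlex_phaseField_of_hasMeanPairing (hω : OnTorus ω)
    {u : C.V × (Fin d → ℤ) → Fin d → ℂ} (hu : C.IsFlex u) {M : ℝ}
    (hM : ∀ k (vi : C.V × Fin d), ‖u (vi.1, k) vi.2‖ ≤ M) {L : C.V × Fin d → ℂ}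
    (hL : HasMeanPairing (fun k (vi : C.V × Fin d) => u (vi.1, k) vi.2) (eOmega ω) L) :
    C.IsFlex (C.phaseField ω fun v i => L (v, i)) := by
  have hcoeff (v : C.V) (i : Fin d) (l : Fin d → ℤ) :
      HasMean (fun k => u (v, l + k) i * conj (eOmega ω k)) (zpowVec ω l * L (v, i)) :=
    (hL (v, i)).comp_add_left_mul_conj_eOmega hω (fun k => hM k (v, i)) l
  intro e k
  obtain ⟨⟨v, l⟩, ⟨w, m⟩, hfst, hsnd⟩ : ∃ x y, C.fst e = x ∧ C.snd e = y := ⟨_, _, rfl, rfl⟩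
  have hflex (k : Fin d → ℤ) :
      ∑ i, (C.edgeVec e i : ℂ) * (u (v, l + k) i - u (w, m + k) i) = 0 := by
    have := hu e k
    rw [hfst, hsnd] at this
    exact this
  have hmotif :
      ∑ i, (C.edgeVec e i : ℂ) * (zpowVec ω l * L (v, i) - zpowVec ω m * L (w, i)) = 0 := by
    have hmean := HasMean.sum Finset.univ fun i _ =>
      ((hcoeff v i l).sub (hcoeff w i m)).const_mul (C.edgeVec e i : ℂ)
    refine hmean.unique ?_
    convert hasMean_const (0 : ℂ) using 2 with k
    simp only [← sub_mul, ← mul_assoc, ← Finset.sum_mul, hflex, zero_mul]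
  rw [hfst, hsnd]
  calc ∑ i, (C.edgeVec e i : ℂ) * (zpowVec ω (l + k) * L (v, i) - zpowVec ω (m + k) * L (w, i))
      = zpowVec ω k *
          ∑ i, (C.edgeVec e i : ℂ) * (zpowVec ω l * L (v, i) - zpowVec ω m * L (w, i)) := by
        simp only [zpowVec_add hω.ne_zero, Finset.mul_sum]
        exact Finset.sum_congr rfl fun i _ => by ring
    _ = 0 := by rw [hmotif, mul_zero]

end CrystalFramework

end

/-- The RUM spectrum is the union of the Bohr spectra of the
almost periodic infinitesimal flexes of `C`: a point `ω ∈ 𝕋^d` lies in `Ω(C)` iff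
there is an almost periodic infinitesimal flex `u` of `C` with `[u, e_ω] ≠ 0`. -/
theorem RUM_eq_union_bohrSpectra {d : ℕ} (C : CrystalFramework d)
    (ω : Fin d → ℂ) (hω : OnTorus ω) :
    ω ∈ C.RUM ↔
      ∃ u : C.V × (Fin d → ℤ) → Fin d → ℂ,
        C.IsFlex u ∧
        IsBohrAP (fun k (vi : C.V × Fin d) => u (vi.1, k) vi.2) ∧
        ∃ L : C.V × Fin d → ℂ, L ≠ 0 ∧
          HasMeanPairing (fun k (vi : C.V × Fin d) => u (vi.1, k) vi.2)
            (eOmega ω) L := by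
  constructor
  · rintro ⟨-, b, hb, hflex⟩
    refine ⟨C.phaseField ω b, hflex, C.isBohrAP_phaseField hω b, fun vi => b vi.1 vi.2, ?_,
      C.hasMeanPairing_phaseField hω b⟩
    contrapose! hb
    ext v i
    exact congrFun hb (v, i)
  · rintro ⟨u, hu, ⟨⟨M, hM⟩, -⟩, L, hL, hmean⟩
    refine ⟨hω, fun v i => L (v, i), ?_, C.isFlex_phaseField_of_hasMeanPairing hω hu hM hmean⟩
    contrapose! hL
    ext ⟨v, i⟩
    exact congrFun (congrFun hL v) i
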